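/- arXiv:2207.02641 — 2 statements merged into one kernel-verified Lean document; each statement's English description precedes it below -/
import Mathlib

section
/- Let μ and τ be envy-free matchings with τ(i) ⪰_i μ(i) for every agent i, and suppose all items x with x ≻_i τ(i) for some agent i have been removed from the acceptable sets (and from M). Let σ be the reformist envy-free matching with respect to μ in this restricted instance. Then τ is reachable from μ via ⤳ if and only if σ = τ. -/
/-- An instance of the house allocation problem: each agent `i` has a finite set
`acc i` of acceptable items, and a strict total order on `acc i` represented by an
injective rank function (smaller rank = more preferred). -/
structure Instance (ι α : Type*) where
  acc : ι → Finset α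
  rank : ι → α → ℕ
  rankInj : ∀ i, Set.InjOn (rank i) (acc i : Set α)

variable {ι α : Type*}

/-- `I.Pref i x y` means agent `i` strictly prefers item `x` to item `y`. -/
def Instance.Pref (I : Instance ι α) (i : ι) (x y : α) : Prop :=
  x ∈ I.acc i ∧ y ∈ I.acc i ∧ I.rank i x < I.rank i y

/-- `I.WeakPref i x y` means `x = y` or agent `i` strictly prefers `x` to `y`. -/
def Instance.WeakPref (I : Instance ι α) (i : ι) (x y : α) : Prop :=
  x = y ∨ I.Pref i x y

/-- A matching assigns to each agent an acceptable item, injectively. -/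
def IsMatching (I : Instance ι α) (μ : ι → α) : Prop :=
  Function.Injective μ ∧ ∀ i, μ i ∈ I.acc i

/-- A matching is envy-free if no agent prefers another agent's item to her own. -/
def EnvyFree (I : Instance ι α) (μ : ι → α) : Prop :=
  IsMatching I μ ∧ ∀ i j, i ≠ j → ¬ I.Pref i (μ j) (μ i)

/-- `Step I μ σ` (written μ ⤳ σ in the paper): both `μ` and `σ` are envy-free
matchings and exactly one agent exchanges her item for a strictly better one. -/
def Step (I : Instance ι α) (μ σ : ι → α) : Prop :=
  EnvyFree I μ ∧ EnvyFree I σ ∧ ∃ i, I.Pref i (σ i) (μ i) ∧ ∀ j, j ≠ i → μ j = σ j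

/-- `IsSeq I f ℓ`: the matchings `f 0 ⤳ f 1 ⤳ ... ⤳ f ℓ` form a sequence of
single-agent improving exchanges preserving envy-freeness. -/
def IsSeq (I : Instance ι α) (f : ℕ → ι → α) (ℓ : ℕ) : Prop :=
  ∀ t, t < ℓ → Step I (f t) (f (t + 1))

/-- `σ` is a reformist envy-free matching with respect to `μ`: it is reachable
from `μ` via ⤳ and admits no further improving exchange. -/
def Reformist (I : Instance ι α) (μ σ : ι → α) : Prop :=
  Relation.ReflTransGen (Step I) μ σ ∧ ∀ τ, ¬ Step I σ τ

/-- `PrefList I i l`: agent `i`'s acceptable items are exactly those of `l`,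
and `l` lists them from most preferred to least preferred. -/
def PrefList [DecidableEq α] (I : Instance ι α) (i : ι) (l : List α) : Prop :=
  I.acc i = l.toFinset ∧ List.Chain' (I.Pref i) l

/-- Transitivity of strict preference. -/
lemma Instance.Pref.trans' {I : Instance ι α} {i : ι} {x y z : α}
    (h1 : I.Pref i x y) (h2 : I.Pref i y z) : I.Pref i x z :=
  ⟨h1.1, h2.2.1, h1.2.2.trans h2.2.2⟩

/-- Totality of strict preference on acceptable items. -/
lemma Instance.pref_total (I : Instance ι α) {i : ι} {x y : α}
    (hx : x ∈ I.acc i) (hy : y ∈ I.acc i) (hxy : x ≠ y) :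
    I.Pref i x y ∨ I.Pref i y x := by
  rcases lt_trichotomy (I.rank i x) (I.rank i y) with h | h | h
  · exact Or.inl ⟨hx, hy, h⟩
  · exact absurd (I.rankInj i hx hy h) hxy
  · exact Or.inr ⟨hy, hx, h⟩

/-- Commutation lemma: if `τ` is top-ranked for everyone and `τ` is reachable
from `a`, then `τ` is reachable from any one-step successor of `a`. -/
lemma step_comm {I : Instance ι α} {τ : ι → α}
    (hres : ∀ i x, ¬ I.Pref i x (τ i)) :
    ∀ {a : ι → α}, Relation.ReflTransGen (Step I) a τ →
      ∀ ν, Step I a ν → Relation.ReflTransGen (Step I) ν τ := by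
  intro a h
  induction h using Relation.ReflTransGen.head_induction_on with
  | refl =>
    intro ν hst
    obtain ⟨_, _, i, hi, _⟩ := hst
    exact absurd hi (hres i (ν i))
  | @head a c hst1 hct ih =>
    intro ν hst2
    classical
    obtain ⟨hEa, hEc, k, hk, hkoth⟩ := hst1
    obtain ⟨_, hEν, i, hi, hioth⟩ := hst2
    by_cases hik : i = k
    · subst hik
      by_cases hvc : ν i = c i
      · have : ν = c := by
          funext j
          by_cases hj : j = i
          · rw [hj, hvc]
          · rw [← hioth j hj, hkoth j hj]
        rw [this]; exact hct
      · rcases I.pref_total hi.1 hk.1 hvc with hp | hp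
        · -- ν i preferred to c i : Step c ν
          have hstep : Step I c ν := by
            refine ⟨hEc, hEν, i, hp, fun j hj => ?_⟩
            rw [← hkoth j hj, hioth j hj]
          exact ih ν hstep
        · -- c i preferred to ν i : Step ν c
          have hstep : Step I ν c := by
            refine ⟨hEν, hEc, i, hp, fun j hj => ?_⟩
            rw [← hioth j hj, hkoth j hj]
          exact Relation.ReflTransGen.head hstep hct
    · -- i ≠ k, build the common matching ξ
      set ξ : ι → α := Function.update ν k (c k) with hξ
      have hξk : ξ k = c k := Function.update_self k (c k) ν
      have hξne : ∀ j, j ≠ k → ξ j = ν j := fun j hj => Function.update_of_ne hj _ _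
      have hξi : ξ i = ν i := hξne i hik
      have hξoth : ∀ j, j ≠ i → j ≠ k → ξ j = a j := by
        intro j hji hjk
        rw [hξne j hjk, ← hioth j hji]
      -- key item facts
      have hνk : ν k = a k := (hioth k (fun h => hik h.symm)).symm
      have hci : c i = a i := (hkoth i hik).symm
      have hνic : ν i ≠ c k := by
        intro h
        exact (hEν.2 k i fun h' => hik h'.symm) (by rw [← h] at hk; rwa [hνk])
      -- ¬ Pref k (ν i) (c k)
      have hnk : ¬ I.Pref k (ν i) (c k) := by
        intro h
        exact (hEν.2 k i fun h' => hik h'.symm) (by rw [hνk]; exact h.trans' hk)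
      -- ¬ Pref i (c k) (ν i)
      have hni : ¬ I.Pref i (c k) (ν i) := by
        intro h
        have h2 := h.trans' hi
        rw [← hci] at h2
        exact (hEc.2 i k hik) h2
      have hEξ : EnvyFree I ξ := by
        constructor
        · constructor
          · intro j l hjl
            by_cases hjk : j = k <;> by_cases hlk : l = k
            · rw [hjk, hlk]
            · exfalso
              rw [hjk, hξk, hξne l hlk] at hjl
              by_cases hli : l = i
              · rw [hli] at hjl; exact hνic hjl.symm
              · rw [← hioth l hli, hkoth l hlk] at hjl
                exact hlk (hEc.1.1 hjl).symm
            · exfalso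
              rw [hlk, hξk, hξne j hjk] at hjl
              by_cases hji : j = i
              · rw [hji] at hjl; exact hνic hjl
              · rw [← hioth j hji, hkoth j hjk] at hjl
                exact hjk (hEc.1.1 hjl)
            · rw [hξne j hjk, hξne l hlk] at hjl
              exact hEν.1.1 hjl
          · intro j
            by_cases hjk : j = k
            · rw [hjk, hξk]; exact hEc.1.2 k
            · rw [hξne j hjk]; exact hEν.1.2 j
        · intro j l hjl hpref
          by_cases hjk : j = k
          · rw [hjk, hξk] at hpref
            by_cases hli : l = i
            · rw [hli, hξi] at hpref; exact hnk hpref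
            · have hlk : l ≠ k := fun h => hjl (hjk.trans h.symm)
              rw [hξne l hlk, ← hioth l hli, hkoth l hlk] at hpref
              exact hEc.2 k l (fun h => hjl (hjk.trans h)) hpref
          · by_cases hji : j = i
            · rw [hji, hξi] at hpref
              by_cases hlk : l = k
              · rw [hlk, hξk] at hpref; exact hni hpref
              · rw [hξne l hlk] at hpref
                exact hEν.2 i l (fun h => hjl (hji.trans h)) hpref
            · rw [hξne j hjk] at hpref
              by_cases hlk : l = k
              · rw [hlk, hξk, ← hioth j hji, hkoth j hjk] at hpref
                exact hEc.2 j k hjk hpref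
              · rw [hξne l hlk] at hpref
                exact hEν.2 j l hjl hpref
      -- Step c ξ (agent i improves)
      have hstepc : Step I c ξ := by
        refine ⟨hEc, hEξ, i, ?_, fun j hj => ?_⟩
        · rw [hξi, hci]; exact hi
        · by_cases hjk : j = k
          · rw [hjk, hξk]
          · rw [hξoth j hj hjk, ← hkoth j hjk]
      -- Step ν ξ (agent k improves)
      have hstepν : Step I ν ξ := by
        refine ⟨hEν, hEξ, k, ?_, fun j hj => ?_⟩
        · rw [hξk, hνk]; exact hk
        · rw [hξne j hj]
      exact Relation.ReflTransGen.head hstepν (ih ξ hstepc)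

/-- in the restricted instance (no item is strictly preferred by
any agent to her item in `τ`), `τ` is reachable from `μ` iff `τ` equals the
reformist envy-free matching `σ` with respect to `μ`. -/
theorem reachable_iff_eq_reformist (I : Instance ι α) (μ τ σ : ι → α)
    (hμ : EnvyFree I μ) (hτ : EnvyFree I τ)
    (hdom : ∀ i, I.WeakPref i (τ i) (μ i))
    (hrestricted : ∀ i x, ¬ I.Pref i x (τ i))
    (hσ : Reformist I μ σ) :
    Relation.ReflTransGen (Step I) μ τ ↔ σ = τ := by
  constructor
  · intro hreach
    have key : ∀ ν, Relation.ReflTransGen (Step I) μ ν →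
        Relation.ReflTransGen (Step I) ν τ := by
      intro ν h
      induction h with
      | refl => exact hreach
      | tail h1 h2 ih => exact step_comm hrestricted ih _ h2
    rcases (key σ hσ.1).cases_head with h | ⟨c, hc, _⟩
    · exact h
    · exact absurd hc (hσ.2 c)
  · intro h
    rw [← h]
    exact hσ.1
end

section
/- Let μ be envy-free, σ the reformist envy-free matching with respect to μ, and x ∈ M_i an item with x ≻_i σ(i) for some agent i. Then x is not assigned to any agent in any envy-free matching reachable from μ; i.e., for every envy-free matching τ reachable from μ via ⤳ and every agent j, τ(j) ≠ x. -/
variable {ι α : Type*}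

section Aux

variable {ι α : Type*}

private lemma ef_of_reach {I : Instance ι α} {μ τ : ι → α} (hμ : EnvyFree I μ)
    (h : Relation.ReflTransGen (Step I) μ τ) : EnvyFree I τ := by
  induction h with
  | refl => exact hμ
  | tail _ hstep _ => exact hstep.2.1

private lemma rank_mono {I : Instance ι α} {τ σ : ι → α}
    (h : Relation.ReflTransGen (Step I) τ σ) (k : ι) :
    I.rank k (σ k) ≤ I.rank k (τ k) := by
  induction h with
  | refl => exact le_rfl
  | tail _ hstep ih =>
    obtain ⟨_, _, a, hpa, hrest⟩ := hstep
    by_cases hk : k = a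
    · subst hk; exact (hpa.2.2.le).trans ih
    · rw [← hrest k hk]; exact ih

/-- no envy towards `z` is preserved when own item strictly improves -/
private lemma no_envy_improve {I : Instance ι α} {p : ι} {z w w' : α}
    (hw : ¬ I.Pref p z w) (h2 : I.rank p w' < I.rank p w) (hwacc : w ∈ I.acc p) :
    ¬ I.Pref p z w' := fun ⟨hz, _, hlt⟩ => hw ⟨hz, hwacc, hlt.trans h2⟩

private lemma step_diamond {I : Instance ι α} {μ σ1 σ2 : ι → α}
    (h1 : Step I μ σ1) (h2 : Step I μ σ2) :
    ∃ d, Relation.ReflGen (Step I) σ1 d ∧ Relation.ReflTransGen (Step I) σ2 d := by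
  classical
  obtain ⟨hefμ, hefσ1, a, hpa, hrest1⟩ := h1
  obtain ⟨-, hefσ2, b, hpb, hrest2⟩ := h2
  by_cases hab : a = b
  · subst hab
    rcases lt_trichotomy (I.rank a (σ1 a)) (I.rank a (σ2 a)) with hlt | heq | hgt
    · refine ⟨σ1, Relation.ReflGen.refl, Relation.ReflTransGen.single
        ⟨hefσ2, hefσ1, a, ⟨hpa.1, hpb.1, hlt⟩, fun j hj => ?_⟩⟩
      rw [← hrest2 j hj, hrest1 j hj]
    · have heq2 : σ1 = σ2 := by
        funext j
        by_cases hj : j = a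
        · have hjj := I.rankInj a hpa.1 hpb.1 heq
          rw [hj, hjj]
        · rw [← hrest1 j hj, hrest2 j hj]
      exact ⟨σ1, Relation.ReflGen.refl, heq2 ▸ Relation.ReflTransGen.refl⟩
    · refine ⟨σ2, Relation.ReflGen.single
        ⟨hefσ1, hefσ2, a, ⟨hpb.1, hpa.1, hgt⟩, fun j hj => ?_⟩, Relation.ReflTransGen.refl⟩
      rw [← hrest1 j hj, hrest2 j hj]
  · -- different agents
    have hba : b ≠ a := fun h => hab h.symm
    have hσ1b : σ1 b = μ b := (hrest1 b hba).symm
    have hσ2a : σ2 a = μ a := (hrest2 a hab).symm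
    have hy12 : σ1 a ≠ σ2 b := by
      intro h
      have hne := hefσ1.2 b a hba
      rw [hσ1b, h] at hne
      exact hne hpb
    have hy1range : ∀ k, μ k ≠ σ1 a := by
      intro k hk
      by_cases hka : k = a
      · subst hka; exact absurd (hk ▸ hpa.2.2) (lt_irrefl _)
      · exact hka (hefσ1.1.1 (by rw [← hrest1 k hka]; exact hk))
    set d : ι → α := fun k => if k = a then σ1 a else σ2 k with hd
    have hda : d a = σ1 a := by simp [hd]
    have hdne : ∀ k, k ≠ a → d k = σ2 k := fun k hk => by simp [hd, hk]
    have hdμ : ∀ k, k ≠ a → k ≠ b → d k = μ k := fun k hk hkb => by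
      rw [hdne k hk, ← hrest2 k hkb]
    have hefd : EnvyFree I d := by
      constructor
      · constructor
        · intro p q hpq
          by_cases hp : p = a <;> by_cases hq : q = a
          · rw [hp, hq]
          · rw [hp, hda] at hpq; rw [hdne q hq] at hpq
            by_cases hqb : q = b
            · exact absurd (hqb ▸ hpq) hy12
            · exact absurd ((hrest2 q hqb) ▸ hpq.symm) (hy1range q)
          · rw [hq, hda] at hpq; rw [hdne p hp] at hpq
            by_cases hpbe : p = b
            · exact absurd (hpbe ▸ hpq.symm) hy12
            · exact absurd ((hrest2 p hpbe) ▸ hpq) (hy1range p)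
          · rw [hdne p hp, hdne q hq] at hpq; exact hefσ2.1.1 hpq
        · intro k
          by_cases hk : k = a
          · subst hk; rw [hda]; exact hpa.1
          · rw [hdne k hk]; exact hefσ2.1.2 k
      · intro p q hpq
        by_cases hq : q = a
        · subst hq
          rw [hda]
          by_cases hpbe : p = b
          · subst hpbe
            rw [hdne p hba]
            have h1 : ¬ I.Pref p (σ1 q) (μ p) := by
              have htmp := hefσ1.2 p q hba; rwa [hσ1b] at htmp
            exact no_envy_improve h1 hpb.2.2 (hefμ.1.2 p)
          · rw [hdμ p hpq hpbe]
            have htmp := hefσ1.2 p q hpq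
            rwa [← hrest1 p hpq] at htmp
        · rw [hdne q hq]
          by_cases hqb : q = b
          · subst hqb
            by_cases hp : p = a
            · subst hp
              rw [hda]
              have h1 : ¬ I.Pref p (σ2 q) (μ p) := by
                have htmp := hefσ2.2 p q hab; rwa [hσ2a] at htmp
              exact no_envy_improve h1 hpa.2.2 (hefμ.1.2 p)
            · rw [hdμ p hp hpq]
              have htmp := hefσ2.2 p q hpq
              rwa [← hrest2 p hpq] at htmp
          · rw [← hrest2 q hqb]
            by_cases hp : p = a
            · subst hp
              rw [hda]
              exact no_envy_improve (hefμ.2 p q (fun h => hq h.symm)) hpa.2.2 (hefμ.1.2 p)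
            · by_cases hpbe : p = b
              · subst hpbe
                rw [hdne p hba]
                exact no_envy_improve (hefμ.2 p q (fun h => hqb h.symm)) hpb.2.2 (hefμ.1.2 p)
              · rw [hdμ p hp hpbe]; exact hefμ.2 p q hpq
    refine ⟨d, Relation.ReflGen.single ⟨hefσ1, hefd, b, ?_, ?_⟩,
      Relation.ReflTransGen.single ⟨hefσ2, hefd, a, ?_, ?_⟩⟩
    · rw [hdne b hba, hσ1b]; exact hpb
    · intro j hj
      by_cases hja : j = a
      · subst hja; rw [hda]
      · rw [hdμ j hja hj, ← hrest1 j hja]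
    · rw [hda, hσ2a]; exact hpa
    · intro j hj; rw [hdne j hj]

end Aux

/-- an item strictly preferred by some agent to her item in the
reformist matching `σ` is never assigned in any matching reachable from `μ`. -/
theorem better_item_never_assigned (I : Instance ι α) (μ σ : ι → α) (i : ι) (x : α)
    (hμ : EnvyFree I μ) (hσ : Reformist I μ σ)
    (hx : x ∈ I.acc i) (hpref : I.Pref i x (σ i)) :
    ∀ τ, Relation.ReflTransGen (Step I) μ τ → ∀ j, τ j ≠ x := by
  intro τ hreach j hτj
  have hefτ : EnvyFree I τ := ef_of_reach hμ hreach
  obtain ⟨hreachσ, hterm⟩ := hσ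
  have hjoin := Relation.church_rosser (fun _ _ _ h1 h2 => step_diamond h1 h2) hreach hreachσ
  obtain ⟨d, hτd, hσd⟩ := hjoin
  have hdσ : d = σ := by
    rcases hσd.cases_head with h | ⟨c, hc, -⟩
    · exact h.symm
    · exact absurd hc (hterm c)
  rw [hdσ] at hτd
  have h1 : I.rank i (σ i) ≤ I.rank i (τ i) := rank_mono hτd i
  have h2 : I.rank i (τ i) ≤ I.rank i x := by
    by_cases hji : j = i
    · subst hji; rw [hτj]
    · have := hefτ.2 i j (fun h => hji h.symm)
      rw [hτj] at this
      by_contra hcon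
      exact this ⟨hx, hefτ.1.2 i, lt_of_not_ge hcon⟩
  exact absurd (hpref.2.2.trans_le (h1.trans h2)) (lt_irrefl _)
end
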